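/- For all integers p, q ≥ 1, the polynomial D_{p,q}(t) := Σ_{L ∈ 𝒟(p,q)} t^{ω(L)−1} satisfies the identity D_{p,q}(t) = D_{p−1,q}(t) + D_{p,q−1}(t) + t^{p+q−2} · D_{p−1,q−1}(t^{p+q−1}), where D_{p−1,q−1}(t^{p+q−1}) denotes the composition of the polynomial D_{p−1,q−1} with the monomial t^{p+q−1}. -/
import Mathlib


/-- A step of a lattice path: east `(1,0)`, north `(0,1)`, or diagonal `(1,1)`. -/
inductive DStep : Type
  | E | N | D
deriving DecidableEq

/-- The displacement vector of a step. -/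
def stepVec : DStep → ℕ × ℕ
  | .E => (1, 0)
  | .N => (0, 1)
  | .D => (1, 1)

/-- A `(p,q)` Delannoy path: a sequence of steps `E`, `N`, `D` whose total
displacement from `(0,0)` is `(p,q)`. -/
def IsDelannoy (p q : ℕ) (l : List DStep) : Prop :=
  (l.map stepVec).sum = (p, q)

/-- `D(p,q)`, the number of `(p,q)` Delannoy paths. -/
noncomputable def delannoyNum (p q : ℕ) : ℕ :=
  Nat.card {l : List DStep // IsDelannoy p q l}

/-- The weight of the part of a Delannoy path starting at the given lattice
point: a diagonal step starting at `(a,b)` contributes a factor `a+b+1`,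
other steps contribute `1`. -/
def weightFrom : ℕ × ℕ → List DStep → ℕ
  | _, [] => 1
  | ab, s :: t => (if s = DStep.D then ab.1 + ab.2 + 1 else 1) * weightFrom (ab + stepVec s) t

/-- The weight `ω(L)` of a Delannoy path `L` (starting at the origin): the
product over all diagonal steps going from a point `(a,b)` to `(a+1,b+1)`
of the numbers `a+b+1`. -/
def weight (l : List DStep) : ℕ := weightFrom (0, 0) l

/-- The weight generating polynomial `D_{p,q}(t) = ∑_{L ∈ 𝒟(p,q)} t^{ω(L)-1}`. -/
noncomputable def Dpoly (p q : ℕ) : Polynomial ℕ :=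
  ∑ᶠ L : {l : List DStep // IsDelannoy p q l}, (Polynomial.X : Polynomial ℕ) ^ (weight L.1 - 1)

instance : Fintype DStep :=
  ⟨⟨{DStep.E, DStep.N, DStep.D}, by decide⟩, by intro x; cases x <;> decide⟩

lemma length_le_of_isDelannoy {p q : ℕ} {l : List DStep} (h : IsDelannoy p q l) :
    l.length ≤ p + q := by
  have key : ∀ l : List DStep,
      l.length ≤ ((l.map stepVec).sum).1 + ((l.map stepVec).sum).2 := by
    intro l
    induction l with
    | nil => simp
    | cons s t ih =>
      simp only [List.map_cons, List.sum_cons, List.length_cons, Prod.fst_add, Prod.snd_add]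
      cases s <;> simp [stepVec] <;> omega
  have := key l
  rw [h] at this
  exact this

instance instFin (p q : ℕ) : Finite {l : List DStep // IsDelannoy p q l} :=
  Set.Finite.to_subtype <| (List.finite_length_le DStep (p + q)).subset
    fun _ h => length_le_of_isDelannoy h

lemma weightFrom_pos (ab : ℕ × ℕ) (l : List DStep) : 0 < weightFrom ab l := by
  induction l generalizing ab with
  | nil => simp [weightFrom]
  | cons s t ih =>
    refine Nat.mul_pos ?_ (ih _)
    split <;> omega

lemma weightFrom_append (ab : ℕ × ℕ) (l m : List DStep) :
    weightFrom ab (l ++ m) = weightFrom ab l * weightFrom (ab + (l.map stepVec).sum) m := by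
  induction l generalizing ab with
  | nil => simp [weightFrom]
  | cons s t ih =>
    simp only [List.cons_append, weightFrom, List.append_eq, ih, List.map_cons, List.sum_cons,
      mul_assoc, add_assoc]

theorem stmt15 (p q : ℕ) (hp : 1 ≤ p) (hq : 1 ≤ q) :
    Dpoly p q =
      Dpoly (p - 1) q + Dpoly p (q - 1) +
        Polynomial.X ^ (p + q - 2) *
          (Dpoly (p - 1) (q - 1)).comp (Polynomial.X ^ (p + q - 1)) := by
  classical
  letI FA : Fintype {l : List DStep // IsDelannoy p q l} := Fintype.ofFinite _
  letI FB : Fintype {l : List DStep // IsDelannoy (p-1) q l} :=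
    @Fintype.ofFinite _ (instFin (p-1) q)
  letI FC : Fintype {l : List DStep // IsDelannoy p (q-1) l} :=
    @Fintype.ofFinite _ (instFin p (q-1))
  letI FD : Fintype {l : List DStep // IsDelannoy (p-1) (q-1) l} :=
    @Fintype.ofFinite _ (instFin (p-1) (q-1))
  -- the backward map
  have hE : ∀ l : List DStep, IsDelannoy (p-1) q l → IsDelannoy p q (l ++ [DStep.E]) := by
    intro l h
    unfold IsDelannoy at h ⊢
    rw [List.map_append, List.sum_append, h]
    simp [stepVec, Prod.ext_iff]
    omega
  have hN : ∀ l : List DStep, IsDelannoy p (q-1) l → IsDelannoy p q (l ++ [DStep.N]) := by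
    intro l h
    unfold IsDelannoy at h ⊢
    rw [List.map_append, List.sum_append, h]
    simp [stepVec, Prod.ext_iff]
    omega
  have hD : ∀ l : List DStep, IsDelannoy (p-1) (q-1) l → IsDelannoy p q (l ++ [DStep.D]) := by
    intro l h
    unfold IsDelannoy at h ⊢
    rw [List.map_append, List.sum_append, h]
    simp [stepVec, Prod.ext_iff]
    omega
  set f : ({l : List DStep // IsDelannoy (p-1) q l} ⊕ {l : List DStep // IsDelannoy p (q-1) l}
      ⊕ {l : List DStep // IsDelannoy (p-1) (q-1) l}) → {l : List DStep // IsDelannoy p q l} :=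
    fun x => match x with
      | .inl ⟨l, h⟩ => ⟨l ++ [DStep.E], hE l h⟩
      | .inr (.inl ⟨l, h⟩) => ⟨l ++ [DStep.N], hN l h⟩
      | .inr (.inr ⟨l, h⟩) => ⟨l ++ [DStep.D], hD l h⟩ with hf
  have hinj : Function.Injective f := by
    rintro (⟨l₁, h₁⟩ | ⟨l₁, h₁⟩ | ⟨l₁, h₁⟩) (⟨l₂, h₂⟩ | ⟨l₂, h₂⟩ | ⟨l₂, h₂⟩) h <;>
      simp only [hf, Subtype.mk.injEq] at h <;>
      obtain ⟨h', h''⟩ := List.append_inj' h rfl <;>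
      simp_all
  have hsurj : Function.Surjective f := by
    rintro ⟨l, h⟩
    rcases l.eq_nil_or_concat' with rfl | ⟨t, s, rfl⟩
    · exfalso
      unfold IsDelannoy at h
      simp [Prod.ext_iff] at h
      omega
    · unfold IsDelannoy at h
      rw [List.map_append, List.sum_append] at h
      have h1 := congrArg Prod.fst h
      have h2 := congrArg Prod.snd h
      cases s
      · simp [stepVec] at h1 h2
        refine ⟨.inl ⟨t, Prod.ext (by omega) (by omega)⟩, rfl⟩
      · simp [stepVec] at h1 h2
        refine ⟨.inr (.inl ⟨t, Prod.ext (by omega) (by omega)⟩), rfl⟩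
      · simp [stepVec] at h1 h2
        refine ⟨.inr (.inr ⟨t, Prod.ext (by omega) (by omega)⟩), rfl⟩
  set e := Equiv.ofBijective f ⟨hinj, hsurj⟩ with he
  have step1 : Dpoly p q = ∑ x, (Polynomial.X : Polynomial ℕ) ^ (weight (f x).1 - 1) := by
    rw [Dpoly, finsum_eq_sum_of_fintype]
    exact (Equiv.sum_comp e _).symm
  rw [step1, Fintype.sum_sum_type, Fintype.sum_sum_type]
  have wE : ∀ l : List DStep, weight (l ++ [DStep.E]) = weight l := by
    intro l
    simp [weight, weightFrom_append, weightFrom]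
  have wN : ∀ l : List DStep, weight (l ++ [DStep.N]) = weight l := by
    intro l
    simp [weight, weightFrom_append, weightFrom]
  have wD : ∀ l : List DStep, IsDelannoy (p-1) (q-1) l →
      weight (l ++ [DStep.D]) = weight l * (p + q - 1) := by
    intro l hx
    unfold IsDelannoy at hx
    simp only [weight, weightFrom_append, weightFrom, hx]
    simp [Prod.fst_add, Prod.snd_add]
    omega
  have hApart : (∑ x : {l : List DStep // IsDelannoy (p-1) q l},
      (Polynomial.X : Polynomial ℕ) ^ (weight (f (.inl x)).1 - 1)) = Dpoly (p-1) q := by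
    rw [Dpoly, finsum_eq_sum_of_fintype]
    refine Finset.sum_congr rfl fun x _ => ?_
    obtain ⟨l, hl⟩ := x
    simp only [hf]
    rw [wE l]
  have hBpart : (∑ x : {l : List DStep // IsDelannoy p (q-1) l},
      (Polynomial.X : Polynomial ℕ) ^ (weight (f (.inr (.inl x))).1 - 1)) = Dpoly p (q-1) := by
    rw [Dpoly, finsum_eq_sum_of_fintype]
    refine Finset.sum_congr rfl fun x _ => ?_
    obtain ⟨l, hl⟩ := x
    simp only [hf]
    rw [wN l]
  have hCpart : (∑ x : {l : List DStep // IsDelannoy (p-1) (q-1) l},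
      (Polynomial.X : Polynomial ℕ) ^ (weight (f (.inr (.inr x))).1 - 1)) =
      Polynomial.X ^ (p + q - 2) *
        (Dpoly (p-1) (q-1)).comp (Polynomial.X ^ (p + q - 1)) := by
    rw [Dpoly, finsum_eq_sum_of_fintype, Polynomial.comp, Polynomial.eval₂_finset_sum,
      Finset.mul_sum]
    refine Finset.sum_congr rfl fun x _ => ?_
    obtain ⟨l, hl⟩ := x
    have hw : 1 ≤ weight l := weightFrom_pos _ _
    obtain ⟨w, hwl⟩ : ∃ w, weight l = w + 1 := ⟨weight l - 1, by omega⟩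
    have key : weight (l ++ [DStep.D]) - 1 = (p + q - 2) + (p + q - 1) * w := by
      rw [wD l hl, hwl]
      have : (w + 1) * (p + q - 1) = (p + q - 1) * w + (p + q - 1) := by ring
      omega
    simp only [hf, key, hwl, Nat.add_sub_cancel]
    rw [pow_add, Polynomial.eval₂_X_pow, ← pow_mul]
  rw [hApart, hBpart, hCpart]
  ring
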